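/- arXiv:2508.15022 — 2 statements merged into one kernel-verified Lean document; each statement's English description precedes it below -/
import Mathlib

section
/- Let p: Q̃ → Q be a weakly admissible quiver covering, k a vertex of Q, and Γ = Deck(p). Then Γ acts freely by quiver automorphisms on the orbit pre-mutation μ̃_[k](Q̃) and on its Γ-loop-free part μ̃_[k](Q̃)^{Γ-lf}, and there are equalities of quivers μ̃_[k](Q̃)^{Γ-lf}/Γ = (μ̃_[k](Q̃)/Γ)^{lf} = μ̃_k(Q), where μ̃_k(Q) is the pre-mutation of Q at k. -/
namespace CMu

/-- A (locally small) quiver with vertex type `V`: a type of arrows together with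
source and target maps.  All quivers in a given statement share the vertex type. -/
structure Quiv (V : Type) where
  Arrow : Type
  src : Arrow → V
  tgt : Arrow → V

variable {V : Type}

namespace Quiv

/-- A quiver is loop-free if no arrow has equal source and target. -/
def LoopFree (Q : Quiv V) : Prop := ∀ a : Q.Arrow, Q.src a ≠ Q.tgt a

/-- A quiver is `2`-acyclic if it contains no oriented `2`-cycle, i.e. there is no pair of
arrows `a, b` with `t a = s b` and `t b = s a` (a loop forms a `2`-cycle with itself). -/
def TwoAcyclic (Q : Quiv V) : Prop :=
  ∀ a b : Q.Arrow, Q.tgt a = Q.src b → Q.tgt b = Q.src a → False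

/-- A quiver is locally finite if each vertex is the source (resp. target) of only
finitely many arrows. -/
def LocallyFinite (Q : Quiv V) : Prop :=
  ∀ v : V, {a : Q.Arrow | Q.src a = v}.Finite ∧ {a : Q.Arrow | Q.tgt a = v}.Finite

/-- The number of arrows from `i` to `j`. -/
noncomputable def nArrows (Q : Quiv V) (i j : V) : ℕ :=
  Nat.card {a : Q.Arrow // Q.src a = i ∧ Q.tgt a = j}

end Quiv

/-- A step of a walk in the underlying graph of a quiver: an arrow traversed forwards,
or an arrow traversed backwards (its formal inverse). -/
inductive Step (Q : Quiv V) : V → V → Type where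
  | fwd (a : Q.Arrow) : Step Q (Q.src a) (Q.tgt a)
  | bwd (a : Q.Arrow) : Step Q (Q.tgt a) (Q.src a)

/-- The inverse of a step. -/
def Step.inv {Q : Quiv V} : {x y : V} → Step Q x y → Step Q y x
  | _, _, .fwd a => .bwd a
  | _, _, .bwd a => .fwd a

/-- A step is forward if it traverses an arrow in its own direction. -/
def Step.IsFwd {Q : Quiv V} : {x y : V} → Step Q x y → Prop
  | _, _, .fwd _ => True
  | _, _, .bwd _ => False

/-- A walk in (the underlying graph of) a quiver `Q` from `x` to `y`:
a word in the arrows of `Q` and their formal inverses. -/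
inductive Walk (Q : Quiv V) : V → V → Type where
  | nil (v : V) : Walk Q v v
  | cons {x y z : V} (e : Step Q x y) (w : Walk Q y z) : Walk Q x z

namespace Walk

/-- Composition (concatenation) of walks. -/
def comp {Q : Quiv V} : {x y z : V} → Walk Q x y → Walk Q y z → Walk Q x z
  | _, _, _, .nil _, w => w
  | _, _, _, .cons e u, w => .cons e (comp u w)

/-- The walk consisting of a single step. -/
def single {Q : Quiv V} {x y : V} (e : Step Q x y) : Walk Q x y := .cons e (.nil _)

/-- The inverse (reversal) of a walk. -/
def inv {Q : Quiv V} : {x y : V} → Walk Q x y → Walk Q y x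
  | _, _, .nil v => .nil v
  | _, _, .cons e u => (inv u).comp (single e.inv)

/-- Transport a walk along equalities of its endpoints. -/
def cast {Q : Quiv V} {x y x' y' : V} (hx : x = x') (hy : y = y') (w : Walk Q x y) :
    Walk Q x' y' := by subst hx; subst hy; exact w

/-- A walk is a (directed) path if all of its steps are forward. -/
def AllFwd {Q : Quiv V} : {x y : V} → Walk Q x y → Prop
  | _, _, .nil _ => True
  | _, _, .cons e w => e.IsFwd ∧ AllFwd w

end Walk

/-- A quiver is acyclic if it contains no (nontrivial) oriented cycle. -/
def Quiv.Acyclic (Q : Quiv V) : Prop :=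
  ∀ (v : V) (w : Walk Q v v), w.AllFwd → w = .nil v

/-- A quiver is connected if any two vertices are joined by a walk. -/
def Quiv.Connected (Q : Quiv V) : Prop := ∀ x y : V, Nonempty (Walk Q x y)

/-- Free homotopy of walks: the equivalence relation on walks generated by cancelling
`e ⬝ e⁻¹`.  Two walks are homotopic iff they have the same reduction, so that the morphisms
of the free groupoid `π(Q)` from `x` to `y` are the homotopy classes of walks from `x` to `y`. -/
inductive WalkHtpy (Q : Quiv V) : {x y : V} → Walk Q x y → Walk Q x y → Prop
  | refl {x y : V} (w : Walk Q x y) : WalkHtpy Q w w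
  | symm {x y : V} {w u : Walk Q x y} : WalkHtpy Q w u → WalkHtpy Q u w
  | trans {x y : V} {w u t : Walk Q x y} : WalkHtpy Q w u → WalkHtpy Q u t → WalkHtpy Q w t
  | cancel {x y z : V} (e : Step Q x y) (w : Walk Q x z) :
      WalkHtpy Q (.cons e (.cons e.inv w)) w
  | congr {x y z : V} (e : Step Q x y) {w u : Walk Q y z} :
      WalkHtpy Q w u → WalkHtpy Q (.cons e w) (.cons e u)

/-- A family of sets of cyclic walks, one at each vertex.  Such a family, when it satisfies
`IsHomotopy`, encodes a normal subgroupoid (a *homotopy*) `H` of the free groupoid `π(Q)`: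
`H(v,v)` is the set of homotopy classes of the walks in the family at `v`. -/
def HSet (Q : Quiv V) := ∀ v : V, Set (Walk Q v v)

/-- `H` is a homotopy on `Q` (a normal subgroupoid of the free groupoid `π(Q)`):
each `H v` is closed under free homotopy of walks, contains the identity, is closed under
composition and inverse (so it determines a subgroup of `π₁(Q,v) = π(Q)(v,v)`), and the family
is closed under conjugation by arbitrary walks. -/
structure IsHomotopy (Q : Quiv V) (H : HSet Q) : Prop where
  htpy_mem : ∀ {v : V} {w u : Walk Q v v}, WalkHtpy Q w u → w ∈ H v → u ∈ H v
  nil_mem : ∀ v : V, Walk.nil v ∈ H v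
  comp_mem : ∀ {v : V} {w u : Walk Q v v}, w ∈ H v → u ∈ H v → w.comp u ∈ H v
  inv_mem : ∀ {v : V} {w : Walk Q v v}, w ∈ H v → w.inv ∈ H v
  conj_mem : ∀ {x y : V} (g : Walk Q x y) {w : Walk Q x x},
    w ∈ H x → (g.inv.comp (w.comp g)) ∈ H y

/-- The oriented `2`-cycle determined by arrows `a : i → j` and `b : j → i`, as a cyclic
walk based at `i = s a`. -/
def twoCycle {Q : Quiv V} (a b : Q.Arrow) (h : Q.tgt a = Q.src b) (h' : Q.tgt b = Q.src a) :
    Walk Q (Q.src a) (Q.src a) :=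
  Walk.cons (.fwd a) ((Walk.single (.fwd b)).cast h.symm h')

/-- A homotopy is reduced if it contains no oriented `2`-cycle of `Q`. -/
def IsReducedH (Q : Quiv V) (H : HSet Q) : Prop :=
  ∀ (a b : Q.Arrow) (h : Q.tgt a = Q.src b) (h' : Q.tgt b = Q.src a),
    twoCycle a b h h' ∉ H (Q.src a)

/-- Two walks `w, u : x → y` represent the same morphism of the quotient groupoid
`π(Q)/H` iff `w⁻¹ u ∈ H`. -/
def HEquiv {Q : Quiv V} (H : HSet Q) {x y : V} (w u : Walk Q x y) : Prop :=
  w.inv.comp u ∈ H y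

/-- The trivial homotopy `𝟙`: only the identity morphisms, i.e. only walks homotopic
to the constant walk. -/
def trivH (Q : Quiv V) : HSet Q := fun v => {w | WalkHtpy Q w (.nil v)}

/-- The maximal homotopy `π(Q)`: all cyclic walks. -/
def maxH (Q : Quiv V) : HSet Q := fun _ => Set.univ

/-- The normal subgroupoid (homotopy) generated by a family `S` of cyclic walks. -/
def genH (Q : Quiv V) (S : HSet Q) : HSet Q := fun v =>
  {w | ∀ K : HSet Q, IsHomotopy Q K → (∀ x, S x ⊆ K x) → w ∈ K v}

/-- The squares of all cyclic walks; `genH Q (sqGens Q)` is the normal subgroupoid `π(Q)²`. -/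
def sqGens (Q : Quiv V) : HSet Q := fun v => {w | ∃ u : Walk Q v v, w = u.comp u}

/-- A morphism from the free groupoid on `Q` to the free groupoid on `R` (both over the same
vertex type, fixing all vertices), given by a choice of a walk in `R` for every arrow of `Q`. -/
structure QMap (Q R : Quiv V) where
  toWalk : (a : Q.Arrow) → Walk R (Q.src a) (Q.tgt a)

namespace QMap

/-- The image of a step. -/
def mapStep {Q R : Quiv V} (F : QMap Q R) : {x y : V} → Step Q x y → Walk R x y
  | _, _, .fwd a => F.toWalk a
  | _, _, .bwd a => (F.toWalk a).inv

/-- The induced map on walks. -/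
def mapWalk {Q R : Quiv V} (F : QMap Q R) : {x y : V} → Walk Q x y → Walk R x y
  | _, _, .nil v => .nil v
  | _, _, .cons e w => (F.mapStep e).comp (F.mapWalk w)

/-- Composition of `QMap`s. -/
def comp {Q R S : Quiv V} (F : QMap Q R) (G : QMap R S) : QMap Q S :=
  ⟨fun a => G.mapWalk (F.toWalk a)⟩

end QMap

/-- The kernel, relative to a homotopy `H` on `R`, of the functor `π(Q) → π(R)/H`
induced by a `QMap`: all cyclic walks whose image lies in `H`. -/
def kerH {Q R : Quiv V} (F : QMap Q R) (H : HSet R) : HSet Q :=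
  fun v => {w | F.mapWalk w ∈ H v}

/-- A (vertex-fixing) isomorphism of quivers over the same vertex type. -/
structure QIso (Q R : Quiv V) where
  arr : Q.Arrow ≃ R.Arrow
  src_eq : ∀ a, R.src (arr a) = Q.src a
  tgt_eq : ∀ a, R.tgt (arr a) = Q.tgt a

/-- The `QMap` underlying a quiver isomorphism. -/
def QIso.toQMap {Q R : Quiv V} (f : QIso Q R) : QMap Q R :=
  ⟨fun a => (Walk.single (.fwd (f.arr a))).cast (f.src_eq a) (f.tgt_eq a)⟩

/-- The pre-mutation `μ̃_k(Q)` of a loop-free quiver `Q` at the vertex `k`: arrows of `Q` not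
incident to `k` are kept, arrows incident to `k` are replaced by reversed arrows `γ*`, and
for every pair of arrows `α, β` with `s α = t β = k` and `s β ≠ t α` a new composite arrow
`[αβ] : s β → t α` is added. -/
def preMut (Q : Quiv V) (k : V) : Quiv V where
  Arrow := {a : Q.Arrow // Q.src a ≠ k ∧ Q.tgt a ≠ k} ⊕
    ({a : Q.Arrow // Q.src a = k ∨ Q.tgt a = k} ⊕
     {p : Q.Arrow × Q.Arrow // Q.src p.1 = k ∧ Q.tgt p.2 = k ∧ Q.src p.2 ≠ Q.tgt p.1})
  src x := match x with
    | .inl a => Q.src a.1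
    | .inr (.inl a) => Q.tgt a.1
    | .inr (.inr p) => Q.src p.1.2
  tgt x := match x with
    | .inl a => Q.tgt a.1
    | .inr (.inl a) => Q.src a.1
    | .inr (.inr p) => Q.tgt p.1.1

/-- The canonical functor `φ : π(μ̃_k Q) → π(Q)` (to be composed with `π(Q) → π(Q)/H`):
it fixes all vertices, sends a kept arrow `γ` to `γ`, a reversed arrow `γ*` to `γ⁻¹`, and a
composite arrow `[αβ]` to the walk `αβ`. -/
def phiQMap (Q : Quiv V) (k : V) : QMap (preMut Q k) Q where
  toWalk x := match x with
    | .inl a => Walk.single (.fwd a.1)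
    | .inr (.inl a) => Walk.single (.bwd a.1)
    | .inr (.inr p) => Walk.cons (.fwd p.1.2)
        ((Walk.single (.fwd p.1.1)).cast (p.2.1.trans p.2.2.1.symm) rfl)

/-- The homotopy `H' = ker (φ : π(μ̃_k Q) → π(Q)/H)` of the pre-mutation `μ̃_k(Q,H) = (Q',H')`. -/
def preH (Q : Quiv V) (H : HSet Q) (k : V) : HSet (preMut Q k) := kerH (phiQMap Q k) H

/-- The subquiver of `R` obtained by deleting the arrows in `S`. -/
def restrictQ (R : Quiv V) (S : Set R.Arrow) : Quiv V where
  Arrow := {a : R.Arrow // a ∉ S}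
  src a := R.src a.1
  tgt a := R.tgt a.1

/-- The inclusion `QMap` of a subquiver. -/
def inclQMap (R : Quiv V) (S : Set R.Arrow) : QMap (restrictQ R S) R :=
  ⟨fun a => Walk.single (.fwd a.1)⟩

/-- A deletion of `2`-cycles lying in a homotopy `H` on a quiver `R`, away from the
vertex `k`: a collection of pairwise disjoint pairs of opposite arrows `(γ, δ)` between two
distinct vertices `i ≠ j`, both different from `k`, such that each composite `2`-cycle `γδ`
lies in `H`. -/
structure TwoCycleDeletion (R : Quiv V) (H : HSet R) (k : V) where
  pairs : Set (R.Arrow × R.Arrow)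
  endpoints : ∀ q ∈ pairs, R.tgt q.1 = R.src q.2 ∧ R.tgt q.2 = R.src q.1
  src_ne_k : ∀ q ∈ pairs, R.src q.1 ≠ k
  tgt_ne_k : ∀ q ∈ pairs, R.tgt q.1 ≠ k
  src_ne_tgt : ∀ q ∈ pairs, R.src q.1 ≠ R.tgt q.1
  mem_H : ∀ q ∈ pairs, ∀ (h : R.tgt q.1 = R.src q.2) (h' : R.tgt q.2 = R.src q.1),
    twoCycle q.1 q.2 h h' ∈ H (R.src q.1)
  disjoint : ∀ q ∈ pairs, ∀ q' ∈ pairs, q ≠ q' →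
    q.1 ≠ q'.1 ∧ q.1 ≠ q'.2 ∧ q.2 ≠ q'.1 ∧ q.2 ≠ q'.2

namespace TwoCycleDeletion

variable {R : Quiv V} {H : HSet R} {k : V}

/-- The set of deleted arrows. -/
def deleted (D : TwoCycleDeletion R H k) : Set R.Arrow :=
  {a | ∃ q ∈ D.pairs, a = q.1 ∨ a = q.2}

/-- A deletion is maximal if no `2`-cycle lying in `H` (between two distinct vertices, both
different from `k`) survives it.  This is the result of the iterative deletion procedure. -/
def Maximal (D : TwoCycleDeletion R H k) : Prop :=
  ∀ γ δ : R.Arrow, γ ∉ D.deleted → δ ∉ D.deleted →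
    R.src γ ≠ k → R.tgt γ ≠ k → R.src γ ≠ R.tgt γ →
    ∀ (h : R.tgt γ = R.src δ) (h' : R.tgt δ = R.src γ),
      twoCycle γ δ h h' ∉ H (R.src γ)

end TwoCycleDeletion

/-- The quiver `Q†` of the mutation `μ_k(Q,H) = (Q†,H†)` determined by a choice `D` of
deleted `2`-cycles. -/
def mutQuiv (Q : Quiv V) (H : HSet Q) (k : V)
    (D : TwoCycleDeletion (preMut Q k) (preH Q H k) k) : Quiv V :=
  restrictQ (preMut Q k) D.deleted

/-- The homotopy `H† = ker (ψ : π(Q†) → π(Q')/H')` of the mutation `μ_k(Q,H) = (Q†,H†)`,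
where `ψ` is induced by the inclusion `Q† ⊆ Q'`. -/
def mutH (Q : Quiv V) (H : HSet Q) (k : V)
    (D : TwoCycleDeletion (preMut Q k) (preH Q H k) k) : HSet (mutQuiv Q H k D) :=
  kerH (inclQMap (preMut Q k) D.deleted) (preH Q H k)

/-- `(R, K)` is (isomorphic, by a vertex-fixing isomorphism matching the homotopies, to)
the mutation `μ_k(Q, H)` of the quiver with homotopy `(Q, H)` in direction `k`. -/
def IsMutationStep (Q : Quiv V) (H : HSet Q) (k : V) (R : Quiv V) (K : HSet R) : Prop :=
  ∃ D : TwoCycleDeletion (preMut Q k) (preH Q H k) k, D.Maximal ∧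
    ∃ f : QIso (mutQuiv Q H k D) R,
      ∀ (v : V) (w : Walk (mutQuiv Q H k D) v v),
        w ∈ mutH Q H k D v ↔ f.toQMap.mapWalk w ∈ K v

/-- A `QMap` `F : π(Q) → π(R)` induces an isomorphism of quotient groupoids
`π(Q)/H_Q ≅ π(R)/H_R` (it is the identity on objects, well defined, full and faithful
on all morphism sets). -/
structure InducesQuotIso {Q R : Quiv V} (F : QMap Q R) (HQ : HSet Q) (HR : HSet R) : Prop where
  maps : ∀ {x y : V} (w u : Walk Q x y), HEquiv HQ w u → HEquiv HR (F.mapWalk w) (F.mapWalk u)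
  full : ∀ {x y : V} (w : Walk R x y), ∃ u : Walk Q x y, HEquiv HR (F.mapWalk u) w
  faithful : ∀ {x y : V} (w u : Walk Q x y),
    HEquiv HR (F.mapWalk w) (F.mapWalk u) → HEquiv HQ w u

/-- A deletion datum for the Fomin–Zelevinsky mutation: a collection of pairwise disjoint
pairs of opposite arrows (oriented `2`-cycles). -/
structure FZDeletion (R : Quiv V) where
  pairs : Set (R.Arrow × R.Arrow)
  endpoints : ∀ q ∈ pairs, R.tgt q.1 = R.src q.2 ∧ R.tgt q.2 = R.src q.1
  disjoint : ∀ q ∈ pairs, ∀ q' ∈ pairs, q ≠ q' →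
    q.1 ≠ q'.1 ∧ q.1 ≠ q'.2 ∧ q.2 ≠ q'.1 ∧ q.2 ≠ q'.2

/-- The arrows deleted by an `FZDeletion`. -/
def FZDeletion.deleted {R : Quiv V} (D : FZDeletion R) : Set R.Arrow :=
  {a | ∃ q ∈ D.pairs, a = q.1 ∨ a = q.2}

/-- `R` is (a representative of) the Fomin–Zelevinsky mutation `μ^FZ_k(Q)` of the `2`-acyclic
quiver `Q`: it is obtained from the pre-mutation of `Q` at `k` by deleting a maximal collection
of oriented `2`-cycles (so that the result is `2`-acyclic), up to vertex-fixing isomorphism. -/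
def IsFZMut (Q : Quiv V) (k : V) (R : Quiv V) : Prop :=
  ∃ D : FZDeletion (preMut Q k),
    (restrictQ (preMut Q k) D.deleted).TwoAcyclic ∧
    Nonempty (QIso (restrictQ (preMut Q k) D.deleted) R)

/-- Two homotopies `H, H'` on `Q` are equivalent if, for every mutation sequence, the
underlying quivers of the corresponding mutated quivers with homotopies are isomorphic by
vertex-fixing isomorphisms. -/
def HomotopyEquivalent (Q : Quiv V) (H H' : HSet Q) : Prop :=
  ∀ (ℓ : ℕ) (ks : ℕ → V)
    (Qs : ℕ → Quiv V) (Hs : ∀ i, HSet (Qs i))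
    (Qs' : ℕ → Quiv V) (Hs' : ∀ i, HSet (Qs' i)),
    Qs 0 = Q → HEq (Hs 0) H → Qs' 0 = Q → HEq (Hs' 0) H' →
    (∀ i < ℓ, IsMutationStep (Qs i) (Hs i) (ks i) (Qs (i + 1)) (Hs (i + 1))) →
    (∀ i < ℓ, IsMutationStep (Qs' i) (Hs' i) (ks i) (Qs' (i + 1)) (Hs' (i + 1))) →
    Nonempty (QIso (Qs ℓ) (Qs' ℓ))

/-- The relation on vertices generated by the arrows (connectivity). -/
def adjRel (Q : Quiv V) : V → V → Prop := fun x y =>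
  ∃ a : Q.Arrow, (Q.src a = x ∧ Q.tgt a = y) ∨ (Q.src a = y ∧ Q.tgt a = x)

/-- The number of connected components of the underlying graph. -/
noncomputable def componentCount (Q : Quiv V) : ℕ := Nat.card (Quot (adjRel Q))

/-- The rank of the fundamental group of (the underlying graph of) a finite quiver:
`|Q₁| - |Q₀| + (number of connected components)`. -/
noncomputable def fundGroupRank (Q : Quiv V) : ℤ :=
  (Nat.card Q.Arrow : ℤ) - (Nat.card V : ℤ) + (componentCount Q : ℤ)

end CMu

namespace CMu

variable {V W : Type}

/-- A morphism of quivers (over possibly different vertex types). -/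
structure QuivHom (Q : Quiv V) (R : Quiv W) where
  onV : V → W
  onA : Q.Arrow → R.Arrow
  src_eq : ∀ a, R.src (onA a) = onV (Q.src a)
  tgt_eq : ∀ a, R.tgt (onA a) = onV (Q.tgt a)

namespace QuivHom

/-- The image of a step under a morphism of quivers. -/
def mapStep {Q : Quiv V} {R : Quiv W} (p : QuivHom Q R) :
    {x y : V} → Step Q x y → Walk R (p.onV x) (p.onV y)
  | _, _, .fwd a => (Walk.single (.fwd (p.onA a))).cast (p.src_eq a) (p.tgt_eq a)
  | _, _, .bwd a => (Walk.single (.bwd (p.onA a))).cast (p.tgt_eq a) (p.src_eq a)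

/-- The image of a walk under a morphism of quivers. -/
def mapWalk {Q : Quiv V} {R : Quiv W} (p : QuivHom Q R) :
    {x y : V} → Walk Q x y → Walk R (p.onV x) (p.onV y)
  | _, _, .nil v => .nil (p.onV v)
  | _, _, .cons e w => (p.mapStep e).comp (p.mapWalk w)

end QuivHom

/-- A covering of quivers: a morphism of quivers which is surjective on vertices and
restricts to bijections between the sets of arrows ending (resp. starting) at any vertex `v`
of the total quiver and the arrows ending (resp. starting) at its image. -/
def IsCovering {Q : Quiv V} {R : Quiv W} (p : QuivHom Q R) : Prop :=
  Function.Surjective p.onV ∧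
  (∀ a b : Q.Arrow, Q.tgt a = Q.tgt b → p.onA a = p.onA b → a = b) ∧
  (∀ (v : V) (b : R.Arrow), R.tgt b = p.onV v → ∃ a : Q.Arrow, Q.tgt a = v ∧ p.onA a = b) ∧
  (∀ a b : Q.Arrow, Q.src a = Q.src b → p.onA a = p.onA b → a = b) ∧
  (∀ (v : V) (b : R.Arrow), R.src b = p.onV v → ∃ a : Q.Arrow, Q.src a = v ∧ p.onA a = b)

/-- An automorphism of a quiver. -/
structure QuivAut (Q : Quiv V) where
  vMap : V ≃ V
  aMap : Q.Arrow ≃ Q.Arrow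
  src_eq : ∀ a, Q.src (aMap a) = vMap (Q.src a)
  tgt_eq : ∀ a, Q.tgt (aMap a) = vMap (Q.tgt a)

/-- A deck transformation of `p`: an automorphism of the total quiver commuting with `p`. -/
def IsDeck {Q : Quiv V} {R : Quiv W} (p : QuivHom Q R) (τ : QuivAut Q) : Prop :=
  (∀ v, p.onV (τ.vMap v) = p.onV v) ∧ (∀ a, p.onA (τ.aMap a) = p.onA a)

/-- A covering is regular (normal) if its deck transformation group acts transitively on
every fiber. -/
def RegularCov {Q : Quiv V} {R : Quiv W} (p : QuivHom Q R) : Prop :=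
  ∀ x y : V, p.onV x = p.onV y → ∃ τ : QuivAut Q, IsDeck p τ ∧ τ.vMap x = y

/-- A (normal) covering `p : Q̃ → Q` is weakly admissible if `Q̃` is `2`-acyclic and `Q` is
loop-free. -/
def WeaklyAdmissible {Qt : Quiv V} {Qb : Quiv W} (p : QuivHom Qt Qb) : Prop :=
  IsCovering p ∧ RegularCov p ∧ Qt.TwoAcyclic ∧ Qb.LoopFree

/-- The orbit pre-mutation of a quiver `Q` at a set `S` of vertices (for `S = p⁻¹(k)` this is
`μ̃_[k](Q̃)`): all arrows incident to `S` are reversed, and for each pair of arrows `(α, β)`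
with `s α = t β ∈ S` a new arrow `[αβ] : s β → t α` is added. -/
def preMutS (Q : Quiv V) (S : Set V) : Quiv V where
  Arrow := {a : Q.Arrow // Q.src a ∉ S ∧ Q.tgt a ∉ S} ⊕
    ({a : Q.Arrow // Q.src a ∈ S ∨ Q.tgt a ∈ S} ⊕
     {p : Q.Arrow × Q.Arrow // Q.src p.1 ∈ S ∧ Q.tgt p.2 = Q.src p.1})
  src x := match x with
    | .inl a => Q.src a.1
    | .inr (.inl a) => Q.tgt a.1
    | .inr (.inr p) => Q.src p.1.2
  tgt x := match x with
    | .inl a => Q.tgt a.1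
    | .inr (.inl a) => Q.src a.1
    | .inr (.inr p) => Q.tgt p.1.1

/-- Forget the defining constraints of an arrow of the orbit pre-mutation: a kept arrow,
a reversed arrow, or a composite pair. -/
def rawA {Q : Quiv V} {S : Set V} :
    (preMutS Q S).Arrow → Q.Arrow ⊕ (Q.Arrow ⊕ Q.Arrow × Q.Arrow)
  | .inl a => .inl a.1
  | .inr (.inl a) => .inr (.inl a.1)
  | .inr (.inr p) => .inr (.inr p.1)

/-- Forget the defining constraints of an arrow of the pre-mutation `μ̃_k(Q)`. -/
def rawPM {Q : Quiv V} {k : V} :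
    (preMut Q k).Arrow → Q.Arrow ⊕ (Q.Arrow ⊕ Q.Arrow × Q.Arrow)
  | .inl a => .inl a.1
  | .inr (.inl a) => .inr (.inl a.1)
  | .inr (.inr p) => .inr (.inr p.1)

/-- The raw action of a map on arrows on the three kinds of arrows. -/
def rawMap {A B : Type} (f : A → B) :
    A ⊕ (A ⊕ A × A) → B ⊕ (B ⊕ B × B) :=
  Sum.map f (Sum.map f (Prod.map f f))

/-- An automorphism of `Q` preserving `S` extends canonically to an automorphism of the
orbit pre-mutation `preMutS Q S`. -/
def preMutSAut {Q : Quiv V} (S : Set V) (τ : QuivAut Q)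
    (hS : ∀ v, v ∈ S ↔ τ.vMap v ∈ S) : QuivAut (preMutS Q S) where
  vMap := τ.vMap
  aMap := Equiv.sumCongr
    (τ.aMap.subtypeEquiv (fun a => by
      rw [τ.src_eq, τ.tgt_eq, ← hS, ← hS]))
    (Equiv.sumCongr
      (τ.aMap.subtypeEquiv (fun a => by
        rw [τ.src_eq, τ.tgt_eq, ← hS, ← hS]))
      ((τ.aMap.prodCongr τ.aMap).subtypeEquiv (fun p => by
        simp only [Equiv.prodCongr_apply, Prod.map_fst, Prod.map_snd]
        rw [τ.src_eq, τ.tgt_eq, ← hS]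
        exact and_congr Iff.rfl ⟨fun h => by rw [h], fun h => τ.vMap.injective h⟩)))
  src_eq x := by
    rcases x with a | a | p <;>
      first | exact τ.src_eq _ | exact τ.tgt_eq _
  tgt_eq x := by
    rcases x with a | a | p <;>
      first | exact τ.src_eq _ | exact τ.tgt_eq _

/-- The canonical extension of a deck transformation of `p` to the orbit pre-mutation
`μ̃_[k](Q̃) = preMutS Q̃ (p⁻¹ k)`. -/
def deckAct {Qt : Quiv V} {Qb : Quiv W} (p : QuivHom Qt Qb) (k : W)
    (τ : QuivAut Qt) (hτ : IsDeck p τ) : QuivAut (preMutS Qt (p.onV ⁻¹' {k})) :=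
  preMutSAut _ τ (fun v => by
    simp only [Set.mem_preimage, Set.mem_singleton_iff, hτ.1 v])

/-- The set of arrows deleted by a collection of pairs of opposite arrows. -/
def orbDeleted {R : Quiv V} (pairs : Set (R.Arrow × R.Arrow)) : Set R.Arrow :=
  {a | ∃ q ∈ pairs, a = q.1 ∨ a = q.2}

/-- A valid `Γ`-equivariant maximal choice of `2`-cycles to delete from the orbit
pre-mutation `μ̃_[k](Q̃)` (as in the Lemma on removing `2`-cycles equivariantly):
each pair consists of opposite arrows between two distinct vertices not in `p⁻¹(k)`,
the pairs are pairwise disjoint, the collection is maximal, and it is stable under the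
extended action of every deck transformation. -/
def OrbDelValid {Qt : Quiv V} {Qb : Quiv W} (p : QuivHom Qt Qb) (k : W)
    (pairs : Set ((preMutS Qt (p.onV ⁻¹' {k})).Arrow × (preMutS Qt (p.onV ⁻¹' {k})).Arrow)) :
    Prop :=
  (∀ q ∈ pairs,
      (preMutS Qt (p.onV ⁻¹' {k})).tgt q.1 = (preMutS Qt (p.onV ⁻¹' {k})).src q.2 ∧
      (preMutS Qt (p.onV ⁻¹' {k})).tgt q.2 = (preMutS Qt (p.onV ⁻¹' {k})).src q.1 ∧
      (preMutS Qt (p.onV ⁻¹' {k})).src q.1 ∉ (p.onV ⁻¹' {k}) ∧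
      (preMutS Qt (p.onV ⁻¹' {k})).tgt q.1 ∉ (p.onV ⁻¹' {k}) ∧
      (preMutS Qt (p.onV ⁻¹' {k})).src q.1 ≠ (preMutS Qt (p.onV ⁻¹' {k})).tgt q.1) ∧
  (∀ q ∈ pairs, ∀ q' ∈ pairs, q ≠ q' →
      q.1 ≠ q'.1 ∧ q.1 ≠ q'.2 ∧ q.2 ≠ q'.1 ∧ q.2 ≠ q'.2) ∧
  (∀ γ δ : (preMutS Qt (p.onV ⁻¹' {k})).Arrow,
      γ ∉ orbDeleted pairs → δ ∉ orbDeleted pairs →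
      (preMutS Qt (p.onV ⁻¹' {k})).tgt γ = (preMutS Qt (p.onV ⁻¹' {k})).src δ →
      (preMutS Qt (p.onV ⁻¹' {k})).tgt δ = (preMutS Qt (p.onV ⁻¹' {k})).src γ →
      (preMutS Qt (p.onV ⁻¹' {k})).src γ ∉ (p.onV ⁻¹' {k}) →
      (preMutS Qt (p.onV ⁻¹' {k})).tgt γ ∉ (p.onV ⁻¹' {k}) →
      (preMutS Qt (p.onV ⁻¹' {k})).src γ ≠ (preMutS Qt (p.onV ⁻¹' {k})).tgt γ → False) ∧
  (∀ (τ : QuivAut Qt) (hτ : IsDeck p τ) (q : _ × _),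
      q ∈ pairs ↔ ((deckAct p k τ hτ).aMap q.1, (deckAct p k τ hτ).aMap q.2) ∈ pairs)

/-- The relation on vertices induced by a set of automorphisms. -/
def autRelV {Q : Quiv V} (G : Set (QuivAut Q)) : V → V → Prop :=
  fun x y => ∃ τ ∈ G, τ.vMap x = y

/-- The relation on arrows induced by a set of automorphisms. -/
def autRelA {Q : Quiv V} (G : Set (QuivAut Q)) : Q.Arrow → Q.Arrow → Prop :=
  fun a b => ∃ τ ∈ G, τ.aMap a = b

/-- The quotient quiver of a quiver by (the action of) a set of automorphisms: vertices and
arrows are the orbit classes. -/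
def quotQuiv (Q : Quiv V) (G : Set (QuivAut Q)) : Quiv (Quot (autRelV G)) where
  Arrow := Quot (autRelA G)
  src := Quot.lift (fun a => Quot.mk _ (Q.src a)) (by
    rintro a b ⟨τ, hτ, rfl⟩
    exact Quot.sound ⟨τ, hτ, (τ.src_eq a).symm⟩)
  tgt := Quot.lift (fun a => Quot.mk _ (Q.tgt a)) (by
    rintro a b ⟨τ, hτ, rfl⟩
    exact Quot.sound ⟨τ, hτ, (τ.tgt_eq a).symm⟩)

/-- The quotient morphism onto the quotient quiver. -/
def quotHom (Q : Quiv V) (G : Set (QuivAut Q)) : QuivHom Q (quotQuiv Q G) where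
  onV := Quot.mk _
  onA := Quot.mk _
  src_eq _ := rfl
  tgt_eq _ := rfl

/-- The homotopy `p_*(π(Q̃))` on the base of a covering `p : Q̃ → Q`: at each vertex `x`,
the cyclic walks homotopic to the image of a cyclic walk of `Q̃` based in the fiber of `x`.
For a regular covering this is the normal subgroupoid corresponding to `p` under the Galois
correspondence. -/
def coverH {Qt : Quiv V} {Qb : Quiv W} (p : QuivHom Qt Qb) : HSet Qb :=
  fun x => {w | ∃ (xt : V) (h : p.onV xt = x) (wt : Walk Qt xt xt),
    WalkHtpy Qb ((p.mapWalk wt).cast h h) w}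

/-- `G` is the set of automorphisms of the orbit mutation
`μ_[k](Q̃) = restrictQ (μ̃_[k] Q̃) (orbDeleted pairs)` obtained by restricting the extended
action of the deck transformations of `p`. -/
def GChar {Qt : Quiv V} {Qb : Quiv W} (p : QuivHom Qt Qb) (k : W)
    (pairs : Set ((preMutS Qt (p.onV ⁻¹' {k})).Arrow × (preMutS Qt (p.onV ⁻¹' {k})).Arrow))
    (G : Set (QuivAut (restrictQ (preMutS Qt (p.onV ⁻¹' {k})) (orbDeleted pairs)))) : Prop :=
  ∀ σ, σ ∈ G ↔ ∃ (τ : QuivAut Qt) (hτ : IsDeck p τ),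
    (∀ v, σ.vMap v = τ.vMap v) ∧
    ∀ a, (σ.aMap a).1 = (deckAct p k τ hτ).aMap a.1

/-- `p'` is (isomorphic to) the orbit mutation `μ_[k](p)` of the covering `p` at direction
`[k]`: there are a `Γ`-equivariant maximal deletion of `2`-cycles from the orbit pre-mutation
and isomorphisms of the total and base quivers identifying `p'` with the quotient covering
`μ_[k](Q̃) → μ_[k](Q̃)/Γ`. -/
def IsOrbitMutCov {Qt Qt' : Quiv V} {Qb Qb' : Quiv W}
    (p : QuivHom Qt Qb) (k : W) (p' : QuivHom Qt' Qb') : Prop :=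
  ∃ pairs, OrbDelValid p k pairs ∧
    ∃ G, GChar p k pairs G ∧
      ∃ (ft : QuivHom (restrictQ (preMutS Qt (p.onV ⁻¹' {k})) (orbDeleted pairs)) Qt')
        (fb : QuivHom (quotQuiv (restrictQ (preMutS Qt (p.onV ⁻¹' {k})) (orbDeleted pairs)) G)
          Qb'),
        Function.Bijective ft.onV ∧ Function.Bijective ft.onA ∧
        Function.Bijective fb.onV ∧ Function.Bijective fb.onA ∧
        (∀ v, p'.onV (ft.onV v) = fb.onV (Quot.mk _ v)) ∧
        (∀ a, p'.onA (ft.onA a) = fb.onA (Quot.mk _ a))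

/-- `p` remains weakly admissible after every sequence of at most `m` orbit mutations. -/
def GWAn : ℕ → {Qt : Quiv V} → {Qb : Quiv W} → QuivHom Qt Qb → Prop
  | 0, _, _, p => WeaklyAdmissible p
  | (m + 1), _, _, p => WeaklyAdmissible p ∧
      ∀ (k : W) (Qt' : Quiv V) (Qb' : Quiv W) (p' : QuivHom Qt' Qb'),
        IsOrbitMutCov p k p' → GWAn m p'

/-- A covering is globally weakly admissible if it stays weakly admissible after any finite
sequence of orbit mutations in any directions. -/
def GloballyWeaklyAdmissible {Qt : Quiv V} {Qb : Quiv W} (p : QuivHom Qt Qb) : Prop :=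
  ∀ m : ℕ, GWAn m p

end CMu

namespace CMu

variable {V W : Type}

/-- The orbit pre-mutation `μ̃_[k](Q̃)` of a covering `p : Q̃ → Q` at direction `[k]`. -/
def orbPreMut {Qt : Quiv V} {Qb : Quiv W} (p : QuivHom Qt Qb) (k : W) : Quiv V :=
  preMutS Qt (p.onV ⁻¹' {k})

/-- The set of `Γ`-loops of the orbit pre-mutation: arrows joining two vertices in the same
orbit of the deck transformation group of `p`. -/
def gammaLoops {Qt : Quiv V} {Qb : Quiv W} (p : QuivHom Qt Qb) (k : W) :
    Set (orbPreMut p k).Arrow :=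
  {x | ∃ τ : QuivAut Qt, IsDeck p τ ∧ τ.vMap ((orbPreMut p k).src x) = (orbPreMut p k).tgt x}

end CMu

/-!
Unique lifting of arrows makes a deck transformation of a connected covering with a fixed
vertex trivial, which gives freeness.  Since `p` is regular, the `Γ`-loops of `μ̃_[k](Q̃)` are
exactly the arrows whose endpoints lie in one fibre, i.e. those mapped to loops of the base.
Every other arrow projects, kind by kind (kept, reversed, composite), to an arrow of
`μ̃_k(Q)`; lifting arrows along `p` shows the projection is onto, and regularity together
with unique lifting shows its fibres are the `Γ`-orbits.
-/

namespace CMu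

variable {V W : Type} {Qt : Quiv V} {Qb : Quiv W}

namespace IsDeck

variable {p : QuivHom Qt Qb} {τ : QuivAut Qt}

lemma aMap_eq_of_src (hτ : IsDeck p τ) (hc : IsCovering p) {a a' : Qt.Arrow}
    (h : p.onA a = p.onA a') (hs : τ.vMap (Qt.src a) = Qt.src a') : τ.aMap a = a' :=
  hc.2.2.2.1 _ _ (by rw [τ.src_eq, hs]) (by rw [hτ.2, h])

lemma aMap_eq_of_tgt (hτ : IsDeck p τ) (hc : IsCovering p) {a a' : Qt.Arrow}
    (h : p.onA a = p.onA a') (ht : τ.vMap (Qt.tgt a) = Qt.tgt a') : τ.aMap a = a' :=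
  hc.2.1 _ _ (by rw [τ.tgt_eq, ht]) (by rw [hτ.2, h])

lemma vMap_eq_self_of_walk (hτ : IsDeck p τ) (hc : IsCovering p) {x y : V}
    (w : Walk Qt x y) (hx : τ.vMap x = x) : τ.vMap y = y := by
  induction w with
  | nil => exact hx
  | cons e w ih =>
    refine ih ?_
    cases e with
    | fwd a => rw [← τ.tgt_eq, hτ.aMap_eq_of_src hc rfl (by rw [hx])]
    | bwd a => rw [← τ.src_eq, hτ.aMap_eq_of_tgt hc rfl (by rw [hx])]

lemma eq_self_of_fixed (hτ : IsDeck p τ) (hc : IsCovering p) (hconn : Qt.Connected) {v : V}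
    (hv : τ.vMap v = v) : (∀ w, τ.vMap w = w) ∧ ∀ a, τ.aMap a = a := by
  have hV : ∀ w, τ.vMap w = w := fun w => hτ.vMap_eq_self_of_walk hc (hconn v w).some hv
  exact ⟨hV, fun a => hτ.aMap_eq_of_src hc rfl (hV _)⟩

end IsDeck

lemma RegularCov.exists_deck_aMap_eq {p : QuivHom Qt Qb} (hreg : RegularCov p)
    (hc : IsCovering p) {a a' : Qt.Arrow} (h : p.onA a = p.onA a') :
    ∃ τ : QuivAut Qt, IsDeck p τ ∧ τ.aMap a = a' := by
  obtain ⟨τ, hτ, hs⟩ := hreg (Qt.src a) (Qt.src a') (by rw [← p.src_eq, ← p.src_eq, h])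
  exact ⟨τ, hτ, hτ.aMap_eq_of_src hc h hs⟩

lemma Quiv.LoopFree.preMut {Q : Quiv V} (hQ : Q.LoopFree) (k : V) : (preMut Q k).LoopFree := by
  rintro (⟨a, -⟩ | ⟨a, -⟩ | ⟨_, -, -, h⟩)
  · exact hQ a
  · exact (hQ a).symm
  · exact h

lemma rawA_injective {Q : Quiv V} {S : Set V} : Function.Injective (rawA (Q := Q) (S := S)) := by
  rintro (⟨a, ha⟩ | ⟨a, ha⟩ | ⟨q, hq⟩) (⟨b, hb⟩ | ⟨b, hb⟩ | ⟨q', hq'⟩) h <;>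
    simp_all [rawA] <;> subst_vars <;> rfl

lemma rawPM_injective {Q : Quiv V} {k : V} : Function.Injective (rawPM (Q := Q) (k := k)) := by
  rintro (⟨a, ha⟩ | ⟨a, ha⟩ | ⟨q, hq⟩) (⟨b, hb⟩ | ⟨b, hb⟩ | ⟨q', hq'⟩) h <;>
    simp_all [rawPM] <;> subst_vars <;> rfl

lemma rawMap_comp {A B C : Type} (f : B → C) (g : A → B) (r : A ⊕ (A ⊕ A × A)) :
    rawMap f (rawMap g r) = rawMap (f ∘ g) r := by
  rcases r with _ | _ | _ <;> rfl

lemma rawA_preMutSAut {Q : Quiv V} {S : Set V} (τ : QuivAut Q) (hS : ∀ v, v ∈ S ↔ τ.vMap v ∈ S)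
    (x : (preMutS Q S).Arrow) : rawA ((preMutSAut S τ hS).aMap x) = rawMap τ.aMap (rawA x) := by
  rcases x with _ | _ | _ <;> rfl

lemma preMutSAut_aMap_eq_self {Q : Quiv V} {S : Set V} {τ : QuivAut Q}
    (hS : ∀ v, v ∈ S ↔ τ.vMap v ∈ S) (hτ : ∀ a, τ.aMap a = a) (x : (preMutS Q S).Arrow) :
    (preMutSAut S τ hS).aMap x = x := by
  refine rawA_injective ?_
  rw [rawA_preMutSAut]
  rcases rawA x with _ | _ | _ <;> simp [rawMap, Prod.map, hτ]

variable (p : QuivHom Qt Qb) (k : W)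

lemma rawA_deckAct {τ : QuivAut Qt} (hτ : IsDeck p τ) (x : (orbPreMut p k).Arrow) :
    rawA ((deckAct p k τ hτ).aMap x) = rawMap τ.aMap (rawA x) :=
  rawA_preMutSAut _ _ x

lemma rawMap_rawA_deckAct {τ : QuivAut Qt} (hτ : IsDeck p τ) (x : (orbPreMut p k).Arrow) :
    rawMap p.onA (rawA ((deckAct p k τ hτ).aMap x)) = rawMap p.onA (rawA x) := by
  rw [rawA_deckAct, rawMap_comp, show p.onA ∘ τ.aMap = p.onA from funext hτ.2]

lemma exists_deckAct_eq (hc : IsCovering p) (hreg : RegularCov p)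
    {x y : (orbPreMut p k).Arrow} (h : rawMap p.onA (rawA x) = rawMap p.onA (rawA y)) :
    ∃ (τ : QuivAut Qt) (hτ : IsDeck p τ), (deckAct p k τ hτ).aMap x = y := by
  suffices ∃ τ : QuivAut Qt, IsDeck p τ ∧ rawMap τ.aMap (rawA x) = rawA y by
    obtain ⟨τ, hτ, hxy⟩ := this
    exact ⟨τ, hτ, rawA_injective (by rw [rawA_deckAct, hxy])⟩
  rcases x with ⟨a, ha⟩ | ⟨a, ha⟩ | ⟨⟨α, β⟩, hα, hβα⟩ <;>
    rcases y with ⟨a', ha'⟩ | ⟨a', ha'⟩ | ⟨⟨α', β'⟩, hα', hβα'⟩ <;>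
    simp only [rawA, rawMap, Sum.map_inl, Sum.map_inr, Prod.map, Sum.inl.injEq, Sum.inr.injEq,
      reduceCtorEq, Prod.mk.injEq] at h ⊢
  · exact (hreg.exists_deck_aMap_eq hc h).imp fun _ => id
  · exact (hreg.exists_deck_aMap_eq hc h).imp fun _ => id
  · obtain ⟨τ, hτ, hτα⟩ := hreg.exists_deck_aMap_eq hc h.1
    -- `β` ends where `α` starts, so `τ` moves it along with `α`
    exact ⟨τ, hτ, hτα, hτ.aMap_eq_of_tgt hc h.2 (by rw [hβα, ← τ.src_eq, hτα, hβα'])⟩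

lemma mem_gammaLoops_iff (hreg : RegularCov p) (x : (orbPreMut p k).Arrow) :
    x ∈ gammaLoops p k ↔ p.onV ((orbPreMut p k).src x) = p.onV ((orbPreMut p k).tgt x) :=
  ⟨fun ⟨_, hτ, h⟩ => by rw [← h, hτ.1], fun h => hreg _ _ h⟩

lemma deckAct_mem_gammaLoops_iff (hreg : RegularCov p) {τ : QuivAut Qt} (hτ : IsDeck p τ)
    (x : (orbPreMut p k).Arrow) :
    (deckAct p k τ hτ).aMap x ∈ gammaLoops p k ↔ x ∈ gammaLoops p k := by
  refine (mem_gammaLoops_iff p k hreg _).trans ?_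
  rw [mem_gammaLoops_iff p k hreg]
  erw [(deckAct p k τ hτ).src_eq, (deckAct p k τ hτ).tgt_eq, hτ.1, hτ.1]
  rfl

/-- The projection `μ̃_[k](Q̃)^{Γ-lf} → μ̃_k(Q)`; a composite arrow `[αβ]` that is not a
`Γ`-loop has `s β` and `t α` in different fibres, so `[p α, p β]` is an arrow of `μ̃_k(Q)`. -/
def orbQuotProj (hreg : RegularCov p) :
    QuivHom (restrictQ (orbPreMut p k) (gammaLoops p k)) (preMut Qb k) where
  onV := p.onV
  onA
    | ⟨.inl ⟨a, ha⟩, _⟩ => .inl ⟨p.onA a, by rw [p.src_eq, p.tgt_eq]; exact ha⟩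
    | ⟨.inr (.inl ⟨a, ha⟩), _⟩ => .inr (.inl ⟨p.onA a, by rw [p.src_eq, p.tgt_eq]; exact ha⟩)
    | ⟨.inr (.inr ⟨⟨α, β⟩, hα, hβα⟩), hx⟩ => .inr (.inr ⟨(p.onA α, p.onA β),
        by rw [p.src_eq]; exact hα, by rw [p.tgt_eq, hβα]; exact hα,
        by rw [p.src_eq, p.tgt_eq]; exact fun h => hx (hreg _ _ h)⟩)
  src_eq := by rintro ⟨_ | _ | ⟨⟨_, _⟩, _, _⟩, _⟩ <;> first | exact p.src_eq _ | exact p.tgt_eq _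
  tgt_eq := by rintro ⟨_ | _ | ⟨⟨_, _⟩, _, _⟩, _⟩ <;> first | exact p.src_eq _ | exact p.tgt_eq _

lemma rawPM_orbQuotProj (hreg : RegularCov p)
    (x : (restrictQ (orbPreMut p k) (gammaLoops p k)).Arrow) :
    rawPM ((orbQuotProj p k hreg).onA x) = rawMap p.onA (rawA x.1) := by
  rcases x with ⟨_ | _ | ⟨⟨_, _⟩, _, _⟩, _⟩ <;> rfl

lemma IsCovering.exists_onA_eq {p : QuivHom Qt Qb} (hc : IsCovering p) (b : Qb.Arrow) :
    ∃ a, p.onA a = b := by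
  obtain ⟨v, hv⟩ := hc.1 (Qb.src b)
  obtain ⟨a, -, ha⟩ := hc.2.2.2.2 v b hv.symm
  exact ⟨a, ha⟩

lemma exists_rawA_lift (hc : IsCovering p) (y : (preMut Qb k).Arrow) :
    ∃ x : (orbPreMut p k).Arrow, p.onV ((orbPreMut p k).src x) = (preMut Qb k).src y ∧
      p.onV ((orbPreMut p k).tgt x) = (preMut Qb k).tgt y ∧ rawMap p.onA (rawA x) = rawPM y := by
  rcases y with ⟨b, hb⟩ | ⟨b, hb⟩ | ⟨⟨α', β'⟩, hα', hβ', -⟩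
  · obtain ⟨a, rfl⟩ := hc.exists_onA_eq b
    rw [p.src_eq, p.tgt_eq] at hb
    exact ⟨.inl ⟨a, hb⟩, (p.src_eq a).symm, (p.tgt_eq a).symm, rfl⟩
  · obtain ⟨a, rfl⟩ := hc.exists_onA_eq b
    rw [p.src_eq, p.tgt_eq] at hb
    exact ⟨.inr (.inl ⟨a, hb⟩), (p.tgt_eq a).symm, (p.src_eq a).symm, rfl⟩
  · obtain ⟨v, hv⟩ := hc.1 k
    obtain ⟨α, hα, rfl⟩ := hc.2.2.2.2 v α' (hα'.trans hv.symm)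
    obtain ⟨β, hβ, rfl⟩ := hc.2.2.1 v β' (hβ'.trans hv.symm)
    have hαk : p.onV (Qt.src α) = k := by rw [hα, hv]
    exact ⟨.inr (.inr ⟨(α, β), hαk, hβ.trans hα.symm⟩), (p.src_eq β).symm, (p.tgt_eq α).symm, rfl⟩

lemma orbQuotProj_surjective (hc : IsCovering p) (hreg : RegularCov p) (hQb : Qb.LoopFree) :
    Function.Surjective (orbQuotProj p k hreg).onA := by
  intro y
  obtain ⟨x, hs, ht, hxy⟩ := exists_rawA_lift p k hc y
  have hx : x ∉ gammaLoops p k := by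
    rw [mem_gammaLoops_iff p k hreg, hs, ht]
    exact hQb.preMut k y
  exact ⟨⟨x, hx⟩, rawPM_injective ((rawPM_orbQuotProj p k hreg _).trans hxy)⟩

lemma orbQuotProj_eq_iff (hc : IsCovering p) (hreg : RegularCov p)
    (x y : (restrictQ (orbPreMut p k) (gammaLoops p k)).Arrow) :
    (orbQuotProj p k hreg).onA x = (orbQuotProj p k hreg).onA y ↔
      ∃ (τ : QuivAut Qt) (hτ : IsDeck p τ), (deckAct p k τ hτ).aMap x.1 = y.1 := by
  rw [← rawPM_injective.eq_iff, rawPM_orbQuotProj, rawPM_orbQuotProj]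
  refine ⟨exists_deckAct_eq p k hc hreg, ?_⟩
  rintro ⟨τ, hτ, hxy⟩
  rw [← hxy]
  exact (rawMap_rawA_deckAct p k hτ x.1).symm

lemma deckAct_eq_self_of_fixed (hc : IsCovering p) (hconn : Qt.Connected) {τ : QuivAut Qt}
    (hτ : IsDeck p τ)
    (h : (∃ v, τ.vMap v = v) ∨ ∃ x : (orbPreMut p k).Arrow, (deckAct p k τ hτ).aMap x = x) :
    (∀ v, τ.vMap v = v) ∧ (∀ a, τ.aMap a = a) ∧
      ∀ x : (orbPreMut p k).Arrow, (deckAct p k τ hτ).aMap x = x := by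
  obtain ⟨v, hv⟩ : ∃ v, τ.vMap v = v := h.elim id fun ⟨x, hx⟩ =>
    ⟨(orbPreMut p k).src x, by erw [← (deckAct p k τ hτ).src_eq x, hx]; rfl⟩
  obtain ⟨hV, hA⟩ := hτ.eq_self_of_fixed hc hconn hv
  exact ⟨hV, hA, preMutSAut_aMap_eq_self _ hA⟩

theorem orbit_premutation_quotient_general {V W : Type} {Qt : Quiv V} {Qb : Quiv W}
    (p : QuivHom Qt Qb) (k : W)
    (hwa : WeaklyAdmissible p) (hconn : Qt.Connected) :
    -- the action of `Γ` on the orbit pre-mutation is free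
    (∀ (τ : QuivAut Qt) (hτ : IsDeck p τ),
      ((∃ v, τ.vMap v = v) ∨ ∃ x : (orbPreMut p k).Arrow, (deckAct p k τ hτ).aMap x = x) →
      (∀ v, τ.vMap v = v) ∧ (∀ a, τ.aMap a = a) ∧
        ∀ x : (orbPreMut p k).Arrow, (deckAct p k τ hτ).aMap x = x) ∧
    -- the action preserves the set of `Γ`-loops, hence acts (freely) on `μ̃_[k](Q̃)^{Γ-lf}`
    (∀ (τ : QuivAut Qt) (hτ : IsDeck p τ) (x : (orbPreMut p k).Arrow),
      x ∈ gammaLoops p k ↔ (deckAct p k τ hτ).aMap x ∈ gammaLoops p k) ∧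
    -- `Γ`-loops are exactly the arrows between two vertices of a common fiber
    (∀ x : (orbPreMut p k).Arrow,
      x ∈ gammaLoops p k ↔ p.onV ((orbPreMut p k).src x) = p.onV ((orbPreMut p k).tgt x)) ∧
    -- the quotient of the `Γ`-loop-free part is the pre-mutation `μ̃_k(Q)` of the base
    (∃ pr : QuivHom (restrictQ (orbPreMut p k) (gammaLoops p k)) (preMut Qb k),
      (∀ v, pr.onV v = p.onV v) ∧
      (∀ x, rawPM (pr.onA x) = rawMap p.onA (rawA x.1)) ∧
      Function.Surjective pr.onA ∧
      (∀ x y, pr.onA x = pr.onA y ↔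
        ∃ (τ : QuivAut Qt) (hτ : IsDeck p τ), (deckAct p k τ hτ).aMap x.1 = y.1)) := by
  obtain ⟨hc, hreg, -, hQb⟩ := hwa
  exact ⟨fun τ hτ => deckAct_eq_self_of_fixed p k hc hconn hτ,
    fun τ hτ x => (deckAct_mem_gammaLoops_iff p k hreg hτ x).symm,
    mem_gammaLoops_iff p k hreg,
    orbQuotProj p k hreg, fun _ => rfl, rawPM_orbQuotProj p k hreg,
    orbQuotProj_surjective p k hc hreg hQb, orbQuotProj_eq_iff p k hc hreg⟩

/-- **Orbit pre-mutation descends to the pre-mutation of the base** (Lemma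
`lemma: delete loops`).  Let `p : Q̃ → Q` be a weakly admissible covering of connected
quivers, `k` a vertex of `Q` and `Γ = Deck(p)`.  Then:
* every deck transformation `τ` extends canonically (by `deckAct`) to an automorphism of the
  orbit pre-mutation `μ̃_[k](Q̃)`, and this action of `Γ` is free, both on `μ̃_[k](Q̃)` and on
  its `Γ`-loop-free part `μ̃_[k](Q̃)^{Γ-lf}` (which the action preserves);
* the `Γ`-loops of `μ̃_[k](Q̃)` are exactly the arrows joining two vertices of the same fiber,
  so that deleting `Γ`-loops before taking the quotient is the same as deleting loops after
  taking the quotient;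
* the natural projection realizes the identification
  `μ̃_[k](Q̃)^{Γ-lf}/Γ = (μ̃_[k](Q̃)/Γ)^{lf} = μ̃_k(Q)` : there is a morphism of quivers
  `pr : μ̃_[k](Q̃)^{Γ-lf} → μ̃_k(Q)` lying over `p` on vertices, compatible with the raw
  data of arrows, surjective on arrows, and whose fibers on arrows are exactly the
  `Γ`-orbits. -/
theorem orbit_premutation_quotient {V W : Type} {Qt : Quiv V} {Qb : Quiv W}
    (p : QuivHom Qt Qb) (k : W)
    (hwa : WeaklyAdmissible p) (hconn : Qt.Connected) (hlf : Qt.LocallyFinite) :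
    -- the action of `Γ` on the orbit pre-mutation is free
    (∀ (τ : QuivAut Qt) (hτ : IsDeck p τ),
      ((∃ v, τ.vMap v = v) ∨ ∃ x : (orbPreMut p k).Arrow, (deckAct p k τ hτ).aMap x = x) →
      (∀ v, τ.vMap v = v) ∧ (∀ a, τ.aMap a = a) ∧
        ∀ x : (orbPreMut p k).Arrow, (deckAct p k τ hτ).aMap x = x) ∧
    -- the action preserves the set of `Γ`-loops, hence acts (freely) on `μ̃_[k](Q̃)^{Γ-lf}`
    (∀ (τ : QuivAut Qt) (hτ : IsDeck p τ) (x : (orbPreMut p k).Arrow),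
      x ∈ gammaLoops p k ↔ (deckAct p k τ hτ).aMap x ∈ gammaLoops p k) ∧
    -- `Γ`-loops are exactly the arrows between two vertices of a common fiber
    (∀ x : (orbPreMut p k).Arrow,
      x ∈ gammaLoops p k ↔ p.onV ((orbPreMut p k).src x) = p.onV ((orbPreMut p k).tgt x)) ∧
    -- the quotient of the `Γ`-loop-free part is the pre-mutation `μ̃_k(Q)` of the base
    (∃ pr : QuivHom (restrictQ (orbPreMut p k) (gammaLoops p k)) (preMut Qb k),
      (∀ v, pr.onV v = p.onV v) ∧
      (∀ x, rawPM (pr.onA x) = rawMap p.onA (rawA x.1)) ∧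
      Function.Surjective pr.onA ∧
      (∀ x y, pr.onA x = pr.onA y ↔
        ∃ (τ : QuivAut Qt) (hτ : IsDeck p τ), (deckAct p k τ hτ).aMap x.1 = y.1)) :=
  orbit_premutation_quotient_general p k hwa hconn

end CMu
end

section
/- Let p: Q̃ → Q be a weakly admissible quiver covering and k a vertex of Q. Suppose that for every oriented 2-cycle βα in Q through k (α an arrow from a vertex to k and β the arrow back), the square (βα)² lies in p_*(π₁(Q̃)). Then p is [k]-mutable, i.e. the orbit-mutated covering μ_[k](p): μ_[k](Q̃) → μ_[k](Q̃)/Deck(p) is again weakly admissible. -/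
/-!
The only nontrivial point is that a composite arrow `[αβ] : s β → t α` of `μ_[k](Q̃)` cannot be
a `Γ`-loop. If a deck transformation `τ` sends `s β` to `t α`, then the lift of the `2`-cycle
`c = p(α) p(β)` starting at `s β` ends at `τ (s β)`; since lifting commutes with deck
transformations, the lift of `c²` ends at `τ² (s β)`. As `c² ∈ p_*(π₁(Q̃))`, that lift is closed,
so `τ (t α) = s β`, and `[αβ]`, `τ [αβ]` form a `2`-cycle of surviving arrows outside the fibre
of `k`, contradicting the maximality of the deletion. The remaining cases follow from
`2`-acyclicity of `Q̃`, loop-freeness of `Q` and the same maximality.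
-/

namespace CMu

variable {V W : Type}

section Lifting

variable {Qt : Quiv V} {Qb : Quiv W} (p : QuivHom Qt Qb)

namespace QuivHom

open Classical in
/-- The endpoint of the lift of a step starting at `v` (junk value `v` when there is none). -/
noncomputable def stepLiftEnd : {x y : W} → Step Qb x y → V → V
  | _, _, .fwd b, v =>
      if h : ∃ a, Qt.src a = v ∧ p.onA a = b then Qt.tgt h.choose else v
  | _, _, .bwd b, v =>
      if h : ∃ a, Qt.tgt a = v ∧ p.onA a = b then Qt.src h.choose else v

noncomputable def walkLiftEnd : {x y : W} → Walk Qb x y → V → V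
  | _, _, .nil _, v => v
  | _, _, .cons e w, v => walkLiftEnd w (p.stepLiftEnd e v)

end QuivHom

variable {p}

theorem stepLiftEnd_fwd (hc : IsCovering p) (a : Qt.Arrow) :
    p.stepLiftEnd (.fwd (p.onA a)) (Qt.src a) = Qt.tgt a := by
  have h : ∃ a', Qt.src a' = Qt.src a ∧ p.onA a' = p.onA a := ⟨a, rfl, rfl⟩
  simp only [QuivHom.stepLiftEnd, dif_pos h]
  exact congrArg Qt.tgt (hc.2.2.2.1 _ _ h.choose_spec.1 h.choose_spec.2)

theorem stepLiftEnd_bwd (hc : IsCovering p) (a : Qt.Arrow) :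
    p.stepLiftEnd (.bwd (p.onA a)) (Qt.tgt a) = Qt.src a := by
  have h : ∃ a', Qt.tgt a' = Qt.tgt a ∧ p.onA a' = p.onA a := ⟨a, rfl, rfl⟩
  simp only [QuivHom.stepLiftEnd, dif_pos h]
  exact congrArg Qt.src (hc.2.1 _ _ h.choose_spec.1 h.choose_spec.2)

theorem onV_stepLiftEnd (hc : IsCovering p) {x y : W} (e : Step Qb x y) {v : V}
    (hv : p.onV v = x) : p.onV (p.stepLiftEnd e v) = y := by
  cases e with
  | fwd b =>
    obtain ⟨a, rfl, rfl⟩ := hc.2.2.2.2 v b hv.symm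
    rw [stepLiftEnd_fwd hc, p.tgt_eq]
  | bwd b =>
    obtain ⟨a, rfl, rfl⟩ := hc.2.2.1 v b hv.symm
    rw [stepLiftEnd_bwd hc, p.src_eq]

theorem stepLiftEnd_inv (hc : IsCovering p) {x y : W} (e : Step Qb x y) {v : V}
    (hv : p.onV v = x) : p.stepLiftEnd e.inv (p.stepLiftEnd e v) = v := by
  cases e with
  | fwd b =>
    obtain ⟨a, rfl, rfl⟩ := hc.2.2.2.2 v b hv.symm
    rw [stepLiftEnd_fwd hc]
    exact stepLiftEnd_bwd hc a
  | bwd b =>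
    obtain ⟨a, rfl, rfl⟩ := hc.2.2.1 v b hv.symm
    rw [stepLiftEnd_bwd hc]
    exact stepLiftEnd_fwd hc a

theorem stepLiftEnd_deck (hc : IsCovering p) {τ : QuivAut Qt} (hτ : IsDeck p τ) {x y : W}
    (e : Step Qb x y) {v : V} (hv : p.onV v = x) :
    p.stepLiftEnd e (τ.vMap v) = τ.vMap (p.stepLiftEnd e v) := by
  cases e with
  | fwd b =>
    obtain ⟨a, rfl, rfl⟩ := hc.2.2.2.2 v b hv.symm
    rw [stepLiftEnd_fwd hc, ← τ.src_eq, ← hτ.2 a, stepLiftEnd_fwd hc, τ.tgt_eq]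
  | bwd b =>
    obtain ⟨a, rfl, rfl⟩ := hc.2.2.1 v b hv.symm
    rw [stepLiftEnd_bwd hc, ← τ.tgt_eq, ← hτ.2 a, stepLiftEnd_bwd hc, τ.src_eq]

theorem walkLiftEnd_comp {x y z : W} (w : Walk Qb x y) (u : Walk Qb y z) (v : V) :
    p.walkLiftEnd (w.comp u) v = p.walkLiftEnd u (p.walkLiftEnd w v) := by
  induction w generalizing v with
  | nil => rfl
  | cons e w ih => exact ih u _

theorem walkLiftEnd_cast {x y x' y' : W} (hx : x = x') (hy : y = y') (w : Walk Qb x y) (v : V) :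
    p.walkLiftEnd (w.cast hx hy) v = p.walkLiftEnd w v := by
  subst hx hy
  rfl

theorem walkLiftEnd_congr_htpy (hc : IsCovering p) {x y : W} {w u : Walk Qb x y}
    (hwu : WalkHtpy Qb w u) {v : V} (hv : p.onV v = x) :
    p.walkLiftEnd w v = p.walkLiftEnd u v := by
  induction hwu generalizing v with
  | refl => rfl
  | symm _ ih => exact (ih hv).symm
  | trans _ _ ih₁ ih₂ => exact (ih₁ hv).trans (ih₂ hv)
  | cancel e w => exact congrArg (p.walkLiftEnd w) (stepLiftEnd_inv hc e hv)
  | congr e _ ih => exact ih (onV_stepLiftEnd hc e hv)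

theorem walkLiftEnd_deck (hc : IsCovering p) {τ : QuivAut Qt} (hτ : IsDeck p τ) {x y : W}
    (w : Walk Qb x y) {v : V} (hv : p.onV v = x) :
    p.walkLiftEnd w (τ.vMap v) = τ.vMap (p.walkLiftEnd w v) := by
  induction w generalizing v with
  | nil => rfl
  | cons e w ih =>
    change p.walkLiftEnd w _ = τ.vMap (p.walkLiftEnd w _)
    rw [stepLiftEnd_deck hc hτ e hv, ih (onV_stepLiftEnd hc e hv)]

theorem walkLiftEnd_mapStep (hc : IsCovering p) {v v' : V} (e : Step Qt v v') :
    p.walkLiftEnd (p.mapStep e) v = v' := by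
  cases e with
  | fwd a => exact (walkLiftEnd_cast _ _ _ _).trans (stepLiftEnd_fwd hc a)
  | bwd a => exact (walkLiftEnd_cast _ _ _ _).trans (stepLiftEnd_bwd hc a)

theorem walkLiftEnd_mapWalk (hc : IsCovering p) {v v' : V} (wt : Walk Qt v v') :
    p.walkLiftEnd (p.mapWalk wt) v = v' := by
  induction wt with
  | nil => rfl
  | cons e w ih =>
    change p.walkLiftEnd (p.mapStep e |>.comp _) _ = _
    rw [walkLiftEnd_comp, walkLiftEnd_mapStep hc, ih]

theorem walkLiftEnd_eq_self_of_mem_coverH (hc : IsCovering p) (hreg : RegularCov p) {x : W}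
    {w : Walk Qb x x} (hw : w ∈ coverH p x) {v : V} (hv : p.onV v = x) :
    p.walkLiftEnd w v = v := by
  obtain ⟨xt, hxt, wt, hhtpy⟩ := hw
  obtain ⟨σ, hσ, rfl⟩ := hreg xt v (hxt.trans hv.symm)
  rw [← walkLiftEnd_congr_htpy hc hhtpy hv, walkLiftEnd_cast,
    walkLiftEnd_deck hc hσ _ rfl, walkLiftEnd_mapWalk hc]

theorem walkLiftEnd_twoCycle (hc : IsCovering p) {a b : Qt.Arrow} (hab : Qt.tgt a = Qt.src b)
    (h : Qb.tgt (p.onA a) = Qb.src (p.onA b)) (h' : Qb.tgt (p.onA b) = Qb.src (p.onA a)) :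
    p.walkLiftEnd (twoCycle (p.onA a) (p.onA b) h h') (Qt.src a) = Qt.tgt b := by
  change p.walkLiftEnd (Walk.cast _ _ _) (p.stepLiftEnd _ _) = _
  rw [walkLiftEnd_cast, stepLiftEnd_fwd hc, hab]
  exact stepLiftEnd_fwd hc b

theorem vMap_tgt_eq_src_of_twoCycle_sq_mem_coverH (hc : IsCovering p) (hreg : RegularCov p)
    {τ : QuivAut Qt} (hτ : IsDeck p τ) {a b : Qt.Arrow} (hab : Qt.tgt a = Qt.src b)
    (hτab : τ.vMap (Qt.src a) = Qt.tgt b)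
    (h : Qb.tgt (p.onA a) = Qb.src (p.onA b)) (h' : Qb.tgt (p.onA b) = Qb.src (p.onA a))
    (hsq : (twoCycle _ _ h h').comp (twoCycle _ _ h h') ∈ coverH p (Qb.src (p.onA a))) :
    τ.vMap (Qt.tgt b) = Qt.src a := by
  have hlift := walkLiftEnd_twoCycle hc hab h h'
  calc τ.vMap (Qt.tgt b)
      = p.walkLiftEnd (twoCycle _ _ h h') (τ.vMap (Qt.src a)) := by
        rw [walkLiftEnd_deck hc hτ _ (p.src_eq a).symm, hlift]
    _ = p.walkLiftEnd ((twoCycle _ _ h h').comp (twoCycle _ _ h h')) (Qt.src a) := by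
        rw [walkLiftEnd_comp, hlift, hτab]
    _ = Qt.src a := walkLiftEnd_eq_self_of_mem_coverH hc hreg hsq (p.src_eq a).symm

end Lifting

section PreMutation

variable {Q : Quiv V}

theorem Quiv.TwoAcyclic.loopFree (h : Q.TwoAcyclic) : Q.LoopFree :=
  fun a ha => h a a ha.symm ha.symm

theorem preMutS_loopFree (h : Q.TwoAcyclic) (S : Set V) : (preMutS Q S).LoopFree := by
  intro x
  rcases x with ⟨a, -⟩ | ⟨a, -⟩ | ⟨⟨α, β⟩, -, hβα⟩ <;> intro hloop
  · exact h.loopFree a hloop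
  · exact h.loopFree a hloop.symm
  · exact h β α hβα hloop.symm

theorem preMutS_reversed_or_not_mem {S : Set V} (hS : ∀ a : Q.Arrow, Q.src a ∈ S → Q.tgt a ∉ S)
    (x : (preMutS Q S).Arrow) :
    (∃ a, x = .inr (.inl a)) ∨ ((preMutS Q S).src x ∉ S ∧ (preMutS Q S).tgt x ∉ S) := by
  rcases x with ⟨a, ha⟩ | a | ⟨⟨α, β⟩, hα, hβα⟩
  · exact .inr ha
  · exact .inl ⟨a, rfl⟩
  · exact .inr ⟨fun hβ => hS β hβ (hβα ▸ hα), hS α hα⟩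

theorem mem_orbDeleted_of_apply_mem {R : Quiv V} {pairs : Set (R.Arrow × R.Arrow)}
    (f : R.Arrow ≃ R.Arrow) (hf : ∀ q, q ∈ pairs ↔ (f q.1, f q.2) ∈ pairs) {a : R.Arrow}
    (ha : f a ∈ orbDeleted pairs) : a ∈ orbDeleted pairs := by
  obtain ⟨q, hq, hqa⟩ := ha
  refine ⟨(f.symm q.1, f.symm q.2), (hf _).2 (by simpa using hq), ?_⟩
  rcases hqa with h | h
  · exact .inl (by rw [← h, Equiv.symm_apply_apply])
  · exact .inr (by rw [← h, Equiv.symm_apply_apply])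

end PreMutation

section OrbitMutation

variable {Qt : Quiv V} {Qb : Quiv W} {p : QuivHom Qt Qb} {k : W}
  {pairs : Set ((preMutS Qt (p.onV ⁻¹' {k})).Arrow × (preMutS Qt (p.onV ⁻¹' {k})).Arrow)}

theorem Quiv.LoopFree.onV_src_ne_onV_tgt (hlf : Qb.LoopFree) (a : Qt.Arrow) :
    p.onV (Qt.src a) ≠ p.onV (Qt.tgt a) := by
  rw [← p.src_eq, ← p.tgt_eq]
  exact hlf _

theorem Quiv.LoopFree.tgt_not_mem_fiber (hlf : Qb.LoopFree) (a : Qt.Arrow)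
    (ha : Qt.src a ∈ p.onV ⁻¹' {k}) : Qt.tgt a ∉ p.onV ⁻¹' {k} :=
  fun ha' => hlf.onV_src_ne_onV_tgt a (ha.trans (Set.mem_singleton_iff.1 ha').symm)

theorem OrbDelValid.false_of_twoCycle (hOD : OrbDelValid p k pairs) (h2 : Qt.TwoAcyclic)
    {γ δ : (preMutS Qt (p.onV ⁻¹' {k})).Arrow} (hγ : γ ∉ orbDeleted pairs)
    (hδ : δ ∉ orbDeleted pairs)
    (hγδ : (preMutS Qt _).tgt γ = (preMutS Qt _).src δ)
    (hδγ : (preMutS Qt _).tgt δ = (preMutS Qt _).src γ)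
    (hs : (preMutS Qt _).src γ ∉ p.onV ⁻¹' {k}) (ht : (preMutS Qt _).tgt γ ∉ p.onV ⁻¹' {k}) :
    False :=
  hOD.2.2.1 γ δ hγ hδ hγδ hδγ hs ht (preMutS_loopFree h2 _ γ)

theorem orbitMutation_twoAcyclic (h2 : Qt.TwoAcyclic) (hlf : Qb.LoopFree)
    (hOD : OrbDelValid p k pairs) :
    (restrictQ (preMutS Qt (p.onV ⁻¹' {k})) (orbDeleted pairs)).TwoAcyclic := by
  rintro ⟨γ, hγ⟩ ⟨δ, hδ⟩ hγδ hδγ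
  rcases preMutS_reversed_or_not_mem hlf.tgt_not_mem_fiber γ with ⟨a, rfl⟩ | ⟨hs, ht⟩
  · -- `γ` is reversed, so `δ`, having the same endpoints, is reversed too
    rcases preMutS_reversed_or_not_mem hlf.tgt_not_mem_fiber δ with ⟨b, rfl⟩ | ⟨hs', ht'⟩
    · exact h2 a b hδγ.symm hγδ.symm
    · rcases a.2 with ha | ha
      · exact hs' (hγδ ▸ ha)
      · exact ht' (hδγ ▸ ha)
  · exact hOD.false_of_twoCycle h2 hγ hδ hγδ hδγ hs ht

theorem orbitMutation_not_mem_gammaLoops (hc : IsCovering p) (hreg : RegularCov p)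
    (h2 : Qt.TwoAcyclic) (hlf : Qb.LoopFree)
    (hsq : ∀ (α β : Qb.Arrow) (h : Qb.tgt α = Qb.src β) (h' : Qb.tgt β = Qb.src α),
      Qb.tgt α = k →
      (twoCycle α β h h').comp (twoCycle α β h h') ∈ coverH p (Qb.src α))
    (hOD : OrbDelValid p k pairs)
    (x : (restrictQ (preMutS Qt (p.onV ⁻¹' {k})) (orbDeleted pairs)).Arrow) :
    x.1 ∉ gammaLoops p k := by
  obtain ⟨x | x | ⟨⟨α, β⟩, hα, hβα⟩, hx⟩ := x <;> rintro ⟨τ, hτ, hloop⟩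
  · exact hlf.onV_src_ne_onV_tgt x.1 ((hτ.1 _).symm.trans (congrArg p.onV hloop))
  · exact hlf.onV_src_ne_onV_tgt x.1 ((congrArg p.onV hloop).symm.trans (hτ.1 _))
  · change τ.vMap (Qt.src β) = Qt.tgt α at hloop
    have hy : (deckAct p k τ hτ).aMap (.inr (.inr ⟨(α, β), hα, hβα⟩)) ∉ orbDeleted pairs :=
      fun hy => hx (mem_orbDeleted_of_apply_mem _ (hOD.2.2.2 τ hτ) hy)
    have h : Qb.tgt (p.onA β) = Qb.src (p.onA α) := by rw [p.tgt_eq, p.src_eq, hβα]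
    have h' : Qb.tgt (p.onA α) = Qb.src (p.onA β) := by rw [p.tgt_eq, p.src_eq, ← hloop, hτ.1]
    have hτ2 : τ.vMap (Qt.tgt α) = Qt.src β :=
      vMap_tgt_eq_src_of_twoCycle_sq_mem_coverH hc hreg hτ hβα hloop h h'
        (hsq _ _ h h' (by rw [p.tgt_eq, hβα]; exact hα))
    obtain ⟨hs, ht⟩ := (preMutS_reversed_or_not_mem hlf.tgt_not_mem_fiber
      (.inr (.inr ⟨(α, β), hα, hβα⟩))).resolve_left (by rintro ⟨_, ⟨⟩⟩)
    exact hOD.false_of_twoCycle h2 hx hy ((τ.src_eq β).trans hloop).symm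
      ((τ.tgt_eq α).trans hτ2) hs ht

end OrbitMutation

theorem sufficient_condition_k_mutable_general {V W : Type} {Qt : Quiv V} {Qb : Quiv W}
    (p : QuivHom Qt Qb) (k : W)
    (hwa : WeaklyAdmissible p)
    (hsq : ∀ (α β : Qb.Arrow) (h : Qb.tgt α = Qb.src β) (h' : Qb.tgt β = Qb.src α),
      Qb.tgt α = k →
      (twoCycle α β h h').comp (twoCycle α β h h') ∈ coverH p (Qb.src α)) :
    ∀ pairs : Set ((preMutS Qt (p.onV ⁻¹' {k})).Arrow × (preMutS Qt (p.onV ⁻¹' {k})).Arrow),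
      OrbDelValid p k pairs →
      (restrictQ (preMutS Qt (p.onV ⁻¹' {k})) (orbDeleted pairs)).TwoAcyclic ∧
      ∀ x : (restrictQ (preMutS Qt (p.onV ⁻¹' {k})) (orbDeleted pairs)).Arrow,
        ¬ ∃ τ : QuivAut Qt, IsDeck p τ ∧
          τ.vMap ((preMutS Qt (p.onV ⁻¹' {k})).src x.1) =
            (preMutS Qt (p.onV ⁻¹' {k})).tgt x.1 := by
  obtain ⟨hc, hreg, h2, hlf⟩ := hwa
  intro pairs hOD
  exact ⟨orbitMutation_twoAcyclic h2 hlf hOD,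
    orbitMutation_not_mem_gammaLoops hc hreg h2 hlf hsq hOD⟩

/-- **A sufficient condition for `[k]`-mutability** (Lemma `lemma: sufficient k-mutable`).
Let `p : Q̃ → Q` be a weakly admissible covering and `k` a vertex of `Q`.  Suppose that for
every oriented `2`-cycle `βα` of `Q` through `k` (with `α` an arrow into `k` and `β` the
arrow back), the square `(βα)²` lies in `p_*(π₁(Q̃))`.  Then `p` is `[k]`-mutable: for any
`Γ`-equivariant maximal deletion of `2`-cycles, the orbit mutation `μ_[k](Q̃)` is `2`-acyclic
and has no `Γ`-loops, i.e. the orbit-mutated covering `μ_[k](p)` is again weakly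
admissible. -/
theorem sufficient_condition_k_mutable {V W : Type} {Qt : Quiv V} {Qb : Quiv W}
    (p : QuivHom Qt Qb) (k : W)
    (hwa : WeaklyAdmissible p) (hconn : Qt.Connected) (hlf : Qt.LocallyFinite)
    (hsq : ∀ (α β : Qb.Arrow) (h : Qb.tgt α = Qb.src β) (h' : Qb.tgt β = Qb.src α),
      Qb.tgt α = k →
      (twoCycle α β h h').comp (twoCycle α β h h') ∈ coverH p (Qb.src α)) :
    ∀ pairs : Set ((preMutS Qt (p.onV ⁻¹' {k})).Arrow × (preMutS Qt (p.onV ⁻¹' {k})).Arrow),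
      OrbDelValid p k pairs →
      (restrictQ (preMutS Qt (p.onV ⁻¹' {k})) (orbDeleted pairs)).TwoAcyclic ∧
      ∀ x : (restrictQ (preMutS Qt (p.onV ⁻¹' {k})) (orbDeleted pairs)).Arrow,
        ¬ ∃ τ : QuivAut Qt, IsDeck p τ ∧
          τ.vMap ((preMutS Qt (p.onV ⁻¹' {k})).src x.1) =
            (preMutS Qt (p.onV ⁻¹' {k})).tgt x.1 :=
  sufficient_condition_k_mutable_general p k hwa hsq

end CMu
end
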